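/- Let H and K be Hilbert spaces and A : H → K a bounded linear operator. Then the range of A and the range of its adjoint A* are linearly isometric as inner product spaces. -/

import Mathlib

/-!
Put `R = √(A†A)`, a positive operator with `R†R = A†A`. For `B` and `C` on a common domain with
`B†B = C†C` we have `‖Bx‖ = ‖Cx‖`, so `Bx ↦ Cx` is a well defined isometry from `range B` onto
`range C`; this identifies `range A` with `range R`. The same hypothesis also forces
`range B† = range C†` (a form of Douglas' lemma): if `Bu_n → v`, then `(Cu_n)` is Cauchy with
limit `w`, and `B†v = lim B†Bu_n = lim C†Cu_n = C†w`, while `B†` vanishes on `(range B)ᗮ`.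
Hence `range A† = range R† = range R`.
-/

open scoped InnerProduct

namespace LinearMap

variable {R E F G : Type*} [Ring R] [AddCommGroup E] [Module R E]
  [NormedAddCommGroup F] [Module R F] [NormedAddCommGroup G] [Module R G]
  {B : E →ₗ[R] F} {C : E →ₗ[R] G}

theorem ker_eq_of_norm_apply_eq (h : ∀ x, ‖B x‖ = ‖C x‖) : ker B = ker C := by
  ext x
  rw [mem_ker, mem_ker, ← norm_eq_zero, h, norm_eq_zero]

theorem cauchySeq_comp_iff_of_norm_apply_eq (h : ∀ x, ‖B x‖ = ‖C x‖) {ι : Type*} [Nonempty ι]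
    [SemilatticeSup ι] {u : ι → E} :
    CauchySeq (fun n ↦ B (u n)) ↔ CauchySeq (fun n ↦ C (u n)) := by
  simp only [Metric.cauchySeq_iff, dist_eq_norm, ← map_sub, h]

noncomputable def rangeEquivOfKerEq (h : ker B = ker C) : range B ≃ₗ[R] range C :=
  B.quotKerEquivRange.symm ≪≫ₗ Submodule.quotEquivOfEq _ _ h ≪≫ₗ C.quotKerEquivRange

@[simp]
theorem rangeEquivOfKerEq_apply (h : ker B = ker C) (x : E) :
    rangeEquivOfKerEq h ⟨B x, mem_range_self B x⟩ = ⟨C x, mem_range_self C x⟩ := by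
  rw [rangeEquivOfKerEq, LinearEquiv.trans_apply, LinearEquiv.trans_apply,
    quotKerEquivRange_symm_apply_image]
  rfl

noncomputable def rangeLinearIsometryEquivOfNormEq (h : ∀ x, ‖B x‖ = ‖C x‖) :
    range B ≃ₗᵢ[R] range C where
  toLinearEquiv := rangeEquivOfKerEq (ker_eq_of_norm_apply_eq h)
  norm_map' := by
    rintro ⟨y, hy⟩
    obtain ⟨x, rfl⟩ := mem_range.mp hy
    simp only [rangeEquivOfKerEq_apply, Submodule.coe_norm, h x]

end LinearMap

namespace ContinuousLinearMap

variable {𝕜 E F G : Type*} [RCLike 𝕜]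
  [NormedAddCommGroup E] [InnerProductSpace 𝕜 E] [CompleteSpace E]
  [NormedAddCommGroup F] [InnerProductSpace 𝕜 F] [CompleteSpace F]
  [NormedAddCommGroup G] [InnerProductSpace 𝕜 G] [CompleteSpace G]
  {B : E →L[𝕜] F} {C : E →L[𝕜] G}

theorem norm_apply_eq_of_adjoint_comp_self_eq (h : B† ∘L B = C† ∘L C) (x : E) :
    ‖B x‖ = ‖C x‖ := by
  have hsq : ‖B x‖ ^ 2 = ‖C x‖ ^ 2 := by
    rw [apply_norm_sq_eq_inner_adjoint_left, apply_norm_sq_eq_inner_adjoint_left, h]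
  exact (sq_eq_sq₀ (norm_nonneg _) (norm_nonneg _)).mp hsq

theorem adjoint_apply_mem_range_adjoint_of_mem_closure (h : B† ∘L B = C† ∘L C) {v : F}
    (hv : v ∈ closure (Set.range B)) : (B†) v ∈ (C†).range := by
  obtain ⟨s, hs, hsv⟩ := mem_closure_iff_seq_limit.mp hv
  choose u hu using hs
  obtain rfl : (fun n ↦ B (u n)) = s := funext hu
  have hCu : CauchySeq (fun n ↦ C (u n)) :=
    (LinearMap.cauchySeq_comp_iff_of_norm_apply_eq
      (norm_apply_eq_of_adjoint_comp_self_eq h)).mp hsv.cauchySeq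
  obtain ⟨w, hw⟩ := cauchySeq_tendsto_of_complete hCu
  refine ⟨w, tendsto_nhds_unique ((C†).continuous.tendsto w |>.comp hw) ?_⟩
  have hBB : ∀ n, (C†) (C (u n)) = (B†) (B (u n)) := fun n ↦ by
    simpa using congr($h.symm (u n))
  simpa only [Function.comp_def, hBB] using (B†).continuous.tendsto v |>.comp hsv

theorem range_adjoint_le_of_adjoint_comp_self_eq (h : B† ∘L B = C† ∘L C) :
    (B†).range ≤ (C†).range := by
  rintro _ ⟨y, rfl⟩
  obtain ⟨z, hz, w, hw, rfl⟩ := B.rangeᗮ.exists_add_mem_mem_orthogonal y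
  have hBz : (B†) z = 0 := by rwa [orthogonal_range] at hz
  rw [Submodule.orthogonal_orthogonal_eq_closure] at hw
  simpa [hBz] using adjoint_apply_mem_range_adjoint_of_mem_closure h hw

theorem range_adjoint_eq_of_adjoint_comp_self_eq (h : B† ∘L B = C† ∘L C) :
    (B†).range = (C†).range :=
  le_antisymm (range_adjoint_le_of_adjoint_comp_self_eq h)
    (range_adjoint_le_of_adjoint_comp_self_eq h.symm)

end ContinuousLinearMap

open ContinuousLinearMap in
theorem range_linearIsometryEquiv_range_adjoint
    {H K : Type*} [NormedAddCommGroup H] [InnerProductSpace ℂ H] [CompleteSpace H]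
    [NormedAddCommGroup K] [InnerProductSpace ℂ K] [CompleteSpace K]
    (A : H →L[ℂ] K) :
    Nonempty (↥(LinearMap.range (A : H →ₗ[ℂ] K)) ≃ₗᵢ[ℂ]
      ↥(LinearMap.range (ContinuousLinearMap.adjoint A : K →ₗ[ℂ] H))) := by
  set R := CFC.sqrt (A† ∘L A)
  have hR : R† = R := isSelfAdjoint_iff'.mp (CFC.sqrt_nonneg _).isSelfAdjoint
  have hRR : R† ∘L R = A† ∘L A := by
    rw [hR]
    exact CFC.sqrt_mul_sqrt_self _ ((nonneg_iff_isPositive _).mpr (isPositive_adjoint_comp_self A))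
  have hrange : R.range = (A†).range := by
    simpa only [hR] using range_adjoint_eq_of_adjoint_comp_self_eq hRR
  exact ⟨(LinearMap.rangeLinearIsometryEquivOfNormEq
    (norm_apply_eq_of_adjoint_comp_self_eq hRR.symm)).trans (LinearIsometryEquiv.ofEq _ _ hrange)⟩
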